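/- arXiv:2305.12041 — 2 statements merged into one kernel-verified Lean document; each statement's English description precedes it below -/
import Mathlib

section
/- Setup: let r ≥ 2 and s ≥ 1 be integers, let G be a finite simple graph on rs vertices with a distinguished vertex x, and let V_1, …, V_r be an almost equitable coloring of G − x with small class V_1, auxiliary digraph H, accessible classes A and non-accessible classes B, chosen so that no almost equitable coloring of G − x has more accessible classes. Let V_i be a terminal accessible class, let v ∈ V_i be an ordinary vertex, and let u ∈ Q'(v) lie in the class W_j ∈ B. If F_0(v) is nonempty, then W_j is not reachable from F_0(v) in H, i.e., there is no directed path in H from any class of F_0(v) to W_j. (This is Lemma 2.3(b) of the paper.) -/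
/-!
Suppose some `P k` in `F₀(v)` reaches `P j`; every class on a shortest such path is
non-accessible. Move `v` into `P k`, shift one movable vertex along each arc of the path into
`P j`, and then move `u` from `P j` into `P i \ {v}`, where it has no neighbour. This gives an
almost equitable coloring that agrees with `P` on every accessible class other than `P i`, so,
`P i` being terminal, those classes stay accessible. The class now holding the second solo
neighbour `u'` has an arc to `P i`; hence if `P i` stays accessible we gain a class. Otherwise
the arc leaving `P i` was witnessed only by `v`, so `P k`, which now contains `v`, becomes
accessible, and so does the second class of the path, which received a vertex of `P k` movable
back to it: two classes are gained and at most `P i` is lost. Either way the maximality of the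
number of accessible classes fails.
-/

open scoped Classical

namespace Equitable

variable {V : Type*}

/-- An equitable `r`-coloring of `G`: a proper coloring with `r` colors whose
color classes pairwise differ in size by at most `1`. -/
def IsEquitableColoring [Fintype V] (G : SimpleGraph V) (r : ℕ) (c : V → Fin r) : Prop :=
  (∀ u v : V, G.Adj u v → c u ≠ c v) ∧
  ∀ i j : Fin r,
    (Finset.univ.filter fun v => c v = i).card ≤
      (Finset.univ.filter fun v => c v = j).card + 1

/-- The number of edges of `G` with both endpoints in `S`. -/
noncomputable def edgesWithin [Fintype V] (G : SimpleGraph V) (S : Finset V) : ℕ :=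
  (G.edgeFinset.filter fun e => ∀ v ∈ e, v ∈ S).card

/-- The number of edges of `G` with one endpoint in `X` and the other in `Y`. -/
noncomputable def edgesBetween [Fintype V] (G : SimpleGraph V) (X Y : Finset V) : ℕ :=
  (G.edgeFinset.filter fun e => ∃ u ∈ X, ∃ w ∈ Y, e = s(u, w)).card

/-- The semi-planar edge bounds. -/
def SemiPlanarBounds [Fintype V] (G : SimpleGraph V) : Prop :=
  (∀ S : Finset V, edgesWithin G S ≤ 3 * S.card) ∧
  ∀ X Y : Finset V, Disjoint X Y → edgesBetween G X Y ≤ 2 * (X.card + Y.card)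

/-- The planar edge bounds. -/
def PlanarBounds [Fintype V] (G : SimpleGraph V) : Prop :=
  (∀ S : Finset V, 3 ≤ S.card → edgesWithin G S ≤ 3 * S.card - 6) ∧
  ∀ X Y : Finset V, Disjoint X Y → 3 ≤ X.card + Y.card →
    edgesBetween G X Y ≤ 2 * (X.card + Y.card) - 4

/-- The semi-planar bipartite edge bound. -/
def SemiPlanarBipBound [Fintype V] (G : SimpleGraph V) : Prop :=
  ∀ X Y : Finset V, Disjoint X Y → edgesBetween G X Y ≤ 2 * (X.card + Y.card)

/-- The planar bipartite edge bound. -/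
def PlanarBipBound [Fintype V] (G : SimpleGraph V) : Prop :=
  ∀ X Y : Finset V, Disjoint X Y → 3 ≤ X.card + Y.card →
    edgesBetween G X Y ≤ 2 * (X.card + Y.card) - 4

/-- `P` is an almost equitable coloring of `G − x`: a partition of `V(G) \ {x}` into `r`
independent sets, the small class `P 0` of size `s − 1` and the other classes of size `s`. -/
def AEColoring [Fintype V] (G : SimpleGraph V) (x : V) {r : ℕ} [NeZero r] (s : ℕ)
    (P : Fin r → Finset V) : Prop :=
  (∀ i j : Fin r, i ≠ j → Disjoint (P i) (P j)) ∧
  (∀ v : V, (∃ i, v ∈ P i) ↔ v ≠ x) ∧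
  (∀ i : Fin r, ∀ u ∈ P i, ∀ w ∈ P i, ¬ G.Adj u w) ∧
  (P 0).card = s - 1 ∧
  ∀ i : Fin r, i ≠ 0 → (P i).card = s

/-- The arc relation of the auxiliary digraph `H`: an arc from class `i` to class `j`
iff `i ≠ j` and some vertex of `P i` has no `G`-neighbor in `P j` (such a vertex
is a witness of the arc and is called movable to `P j`). -/
def Arc (G : SimpleGraph V) {r : ℕ} (P : Fin r → Finset V) (i j : Fin r) : Prop :=
  i ≠ j ∧ ∃ v ∈ P i, ∀ u ∈ P j, ¬ G.Adj v u

/-- A class is accessible if the auxiliary digraph has a directed path (possibly of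
length `0`) from it to the small class `P 0`. -/
def Accessible (G : SimpleGraph V) {r : ℕ} [NeZero r] (P : Fin r → Finset V)
    (i : Fin r) : Prop :=
  Relation.ReflTransGen (Arc G P) i 0

/-- The number of accessible classes. -/
noncomputable def accCount (G : SimpleGraph V) {r : ℕ} [NeZero r]
    (P : Fin r → Finset V) : ℕ :=
  (Finset.univ.filter fun i => Accessible G P i).card

/-- No almost equitable coloring of `G − x` has more accessible classes than `P`. -/
def MaxAccessible [Fintype V] (G : SimpleGraph V) (x : V) {r : ℕ} [NeZero r] (s : ℕ)
    (P : Fin r → Finset V) : Prop :=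
  ∀ P' : Fin r → Finset V, AEColoring G x s P' → accCount G P' ≤ accCount G P

/-- Class `i` blocks class `j` if `i ≠ j` and the auxiliary digraph minus the
class `i` has no directed path from `j` to the small class `P 0`. -/
def Blocks (G : SimpleGraph V) {r : ℕ} [NeZero r] (P : Fin r → Finset V)
    (i j : Fin r) : Prop :=
  i ≠ j ∧ ¬ Relation.ReflTransGen (fun p q => Arc G P p q ∧ p ≠ i ∧ q ≠ i) j 0

/-- An accessible class is terminal if it blocks no accessible class. -/
def Terminal (G : SimpleGraph V) {r : ℕ} [NeZero r] (P : Fin r → Finset V)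
    (i : Fin r) : Prop :=
  Accessible G P i ∧ ∀ j : Fin r, Accessible G P j → ¬ Blocks G P i j

/-- `u` is a solo neighbor of `v` (where `v` lies in the accessible class `P i`):
`u` lies in a non-accessible class, is adjacent to `v`, and `v` is the unique
neighbor of `u` in `P i`.  `Q(v)` is the set of such `u`. -/
def SoloNbr (G : SimpleGraph V) {r : ℕ} [NeZero r] (P : Fin r → Finset V)
    (i : Fin r) (v u : V) : Prop :=
  (∃ k : Fin r, ¬ Accessible G P k ∧ u ∈ P k) ∧ G.Adj v u ∧
    ∀ w ∈ P i, G.Adj u w → w = v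

/-- `u ∈ Q'(v)`: `u` is a solo neighbor of `v` that is non-adjacent to some other
solo neighbor of `v`. -/
def InQ' (G : SimpleGraph V) {r : ℕ} [NeZero r] (P : Fin r → Finset V)
    (i : Fin r) (v u : V) : Prop :=
  SoloNbr G P i v u ∧ ∃ u' : V, SoloNbr G P i v u' ∧ u' ≠ u ∧ ¬ G.Adj u u'

/-- A vertex `v` of a terminal accessible class `P i` is ordinary if some other vertex of
`P i` is movable to another accessible class, or there are at most two accessible classes. -/
def Ordinary (G : SimpleGraph V) {r : ℕ} [NeZero r] (P : Fin r → Finset V)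
    (i : Fin r) (v : V) : Prop :=
  (∃ v' ∈ P i, v' ≠ v ∧
    ∃ j : Fin r, j ≠ i ∧ Accessible G P j ∧ ∀ w ∈ P j, ¬ G.Adj v' w) ∨
  accCount G P ≤ 2

/-- The strong component of the auxiliary digraph containing class `i`. -/
noncomputable def strongComp (G : SimpleGraph V) {r : ℕ} (P : Fin r → Finset V)
    (i : Fin r) : Finset (Fin r) :=
  Finset.univ.filter fun j =>
    Relation.ReflTransGen (Arc G P) i j ∧ Relation.ReflTransGen (Arc G P) j i

theorem _root_.List.exists_nodup_isChain_cons_of_relationReflTransGen {α : Type*}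
    {r : α → α → Prop} {a b : α} (h : Relation.ReflTransGen r a b) :
    ∃ l, (a :: l).IsChain r ∧ (a :: l).getLast (List.cons_ne_nil _ _) = b ∧
      (a :: l).Nodup := by
  induction h using Relation.ReflTransGen.head_induction_on with
  | refl => exact ⟨[], .singleton _, rfl, List.nodup_singleton _⟩
  | @head a c hac _ ih =>
    obtain ⟨l, hl, hlast, hnd⟩ := ih
    by_cases ha : a ∈ c :: l
    · obtain ⟨s, t, hst⟩ := List.append_of_mem ha
      refine ⟨t, hl.suffix ⟨s, hst.symm⟩, ?_,
        hnd.sublist (hst ▸ List.sublist_append_right _ _)⟩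
      simp only [hst, List.getLast_append_of_ne_nil _ (List.cons_ne_nil a t)] at hlast
      exact hlast
    · exact ⟨c :: l, .cons_cons hac hl, by rwa [List.getLast_cons_cons],
        List.nodup_cons.2 ⟨ha, hnd⟩⟩

section PartialColoring

variable {ι : Type*} {G : SimpleGraph V} {R : ι → Finset V} {y z : V} {a c d : ι}

structure IsPartialColoring (G : SimpleGraph V) (R : ι → Finset V) : Prop where
  disjoint : ∀ c d, c ≠ d → Disjoint (R c) (R d)
  indep : ∀ c, ∀ z ∈ R c, ∀ z' ∈ R c, ¬ G.Adj z z'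

theorem IsPartialColoring.eq_of_mem (hR : IsPartialColoring G R) (hc : z ∈ R c) (hd : z ∈ R d) :
    c = d :=
  by_contra fun h => Finset.disjoint_left.1 (hR.disjoint c d h) hc hd

noncomputable def moveTo (R : ι → Finset V) (y : V) (a : ι) : ι → Finset V :=
  Function.update (fun d => (R d).erase y) a (insert y (R a))

@[simp]
theorem moveTo_self : moveTo R y a a = insert y (R a) :=
  Function.update_self ..

@[simp]
theorem moveTo_of_ne (h : d ≠ a) : moveTo R y a d = (R d).erase y :=
  Function.update_of_ne h ..

theorem exists_mem_moveTo_iff : (∃ d, z ∈ moveTo R y a d) ↔ z = y ∨ ∃ d, z ∈ R d := by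
  constructor
  · rintro ⟨d, hz⟩
    by_cases hd : d = a
    · subst hd
      simp only [moveTo_self, Finset.mem_insert] at hz
      exact hz.imp_right fun h => ⟨d, h⟩
    · simp only [moveTo_of_ne hd, Finset.mem_erase] at hz
      exact Or.inr ⟨d, hz.2⟩
  · rintro (rfl | ⟨d, hz⟩)
    · exact ⟨a, by simp⟩
    · by_cases hzy : z = y
      · exact ⟨a, by simp [hzy]⟩
      · by_cases hd : d = a
        · exact ⟨a, by simp [← hd, hz]⟩
        · exact ⟨d, by simp [hd, hzy, hz]⟩

theorem IsPartialColoring.moveTo (hR : IsPartialColoring G R) (hy : ∀ z ∈ R a, ¬ G.Adj y z) :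
    IsPartialColoring G (moveTo R y a) where
  disjoint c d hcd := by
    rw [Finset.disjoint_left]
    intro z hzc hzd
    by_cases hc : c = a
    · subst hc
      rw [moveTo_of_ne (Ne.symm hcd), Finset.mem_erase] at hzd
      rw [moveTo_self, Finset.mem_insert] at hzc
      exact hzc.elim hzd.1 fun hz => Finset.disjoint_left.1 (hR.disjoint c d hcd) hz hzd.2
    · rw [moveTo_of_ne hc, Finset.mem_erase] at hzc
      by_cases hd : d = a
      · subst hd
        rw [moveTo_self, Finset.mem_insert] at hzd
        exact hzd.elim hzc.1 (Finset.disjoint_left.1 (hR.disjoint c d hcd) hzc.2)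
      · rw [moveTo_of_ne hd] at hzd
        exact Finset.disjoint_left.1 (hR.disjoint c d hcd) hzc.2 (Finset.mem_of_mem_erase hzd)
  indep c := by
    by_cases hc : c = a
    · subst hc
      simp only [moveTo_self, Finset.mem_insert]
      rintro z (rfl | hz) z' (rfl | hz')
      · exact G.irrefl
      · exact hy z' hz'
      · exact fun h => hy z hz h.symm
      · exact hR.indep c z hz z' hz'
    · simp only [moveTo_of_ne hc]
      exact fun z hz z' hz' =>
        hR.indep c z (Finset.mem_of_mem_erase hz) z' (Finset.mem_of_mem_erase hz')

end PartialColoring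

section Shift

variable {r : ℕ} {G : SimpleGraph V} {R Q : Fin r → Finset V} {y w : V} {a b c d : Fin r}
  {l : List (Fin r)}

theorem Arc.moveTo (h : Arc G R c d) (hc : c ≠ a) (hd : d ≠ a) (hy : y ∉ R c) :
    Arc G (moveTo R y a) c d := by
  obtain ⟨hcd, w, hw, hwd⟩ := h
  refine ⟨hcd, w, ?_, fun z hz => hwd z ?_⟩
  · rw [moveTo_of_ne hc]
    exact Finset.mem_erase.2 ⟨fun h => hy (h ▸ hw), hw⟩
  · rw [moveTo_of_ne hd] at hz
    exact Finset.mem_of_mem_erase hz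

/-- `Q` arises from `R` by inserting `y` into `R a` and then, along the path `a :: l` of the
auxiliary digraph ending at `b`, moving into each class a vertex of the previous class that has no
neighbour in it. -/
structure IsShift (G : SimpleGraph V) (R Q : Fin r → Finset V) (y : V) (a : Fin r)
    (l : List (Fin r)) (b : Fin r) : Prop where
  isPartialColoring : IsPartialColoring G Q
  eq_erase : ∀ d ∉ a :: l, Q d = (R d).erase y
  exists_mem_iff : ∀ z, (∃ d, z ∈ Q d) ↔ z = y ∨ ∃ d, z ∈ R d
  card_eq : ∀ d ∈ a :: l, d ≠ b → (Q d).card = (R d).card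
  card_last : (Q b).card = (R b).card + 1
  subset_last : R b ⊆ Q b
  mem_head : y ∈ Q a
  arc_to_head : l ≠ [] → ∃ c ∈ l, Arc G Q c a

theorem isShift_moveTo (hR : IsPartialColoring G R) (hy : ∀ z ∈ R a, ¬ G.Adj y z)
    (hya : y ∉ R a) : IsShift G R (moveTo R y a) y a [] a where
  isPartialColoring := hR.moveTo hy
  eq_erase d hd := moveTo_of_ne (by simpa using hd)
  exists_mem_iff _ := exists_mem_moveTo_iff
  card_eq d hd hda := absurd (by simpa using hd) hda
  card_last := by rw [moveTo_self, Finset.card_insert_of_notMem hya]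
  subset_last := by simp only [moveTo_self, Finset.subset_insert]
  mem_head := by simp
  arc_to_head h := absurd rfl h

theorem IsShift.cons (hR : IsPartialColoring G R) (hac : a ≠ c) (hw : w ∈ R a)
    (hwc : ∀ z ∈ R c, ¬ G.Adj w z) (hy : ∀ z ∈ R a, ¬ G.Adj y z) (hya : y ∉ R a)
    (hyl : ∀ d ∈ c :: l, y ∉ R d) (ha : a ∉ c :: l) (hb : b ∈ c :: l)
    (hQ : IsShift G (moveTo R y a) Q w c l b) : IsShift G R Q y a (c :: l) b := by
  have hmove : ∀ d ∈ c :: l, moveTo R y a d = R d := fun d hd => by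
    rw [moveTo_of_ne fun h : d = a => ha (h ▸ hd), Finset.erase_eq_of_notMem (hyl d hd)]
  have hwy : w ≠ y := fun h => hya (h ▸ hw)
  have hQa : Q a = (insert y (R a)).erase w := by rw [hQ.eq_erase a ha, moveTo_self]
  refine ⟨hQ.isPartialColoring, fun d hd => ?_, fun z => ?_, fun d hd hdb => ?_, ?_, ?_, ?_,
    fun _ => ⟨c, List.mem_cons_self, ?_⟩⟩
  · simp only [List.mem_cons, not_or] at hd
    rw [hQ.eq_erase d (by simp [hd.2.1, hd.2.2]), moveTo_of_ne hd.1,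
      Finset.erase_right_comm, Finset.erase_eq_of_notMem fun h => hd.1 (hR.eq_of_mem h hw)]
  · rw [hQ.exists_mem_iff, exists_mem_moveTo_iff]
    constructor
    · rintro (rfl | h)
      exacts [Or.inr ⟨a, hw⟩, h]
    · exact Or.inr
  · rcases List.mem_cons.1 hd with rfl | hd
    · rw [hQa, Finset.card_erase_of_mem (Finset.mem_insert_of_mem hw),
        Finset.card_insert_of_notMem hya, Nat.add_sub_cancel]
    · rw [hQ.card_eq d hd hdb, hmove d hd]
  · rw [hQ.card_last, hmove b hb]
  · exact hmove b hb ▸ hQ.subset_last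
  · rw [hQa]
    exact Finset.mem_erase.2 ⟨hwy.symm, Finset.mem_insert_self y _⟩
  · refine ⟨Ne.symm hac, w, hQ.mem_head, fun z hz => ?_⟩
    rw [hQa, Finset.mem_erase, Finset.mem_insert] at hz
    rcases hz.2 with rfl | hz
    · exact fun h => hy w hw h.symm
    · exact hR.indep a w hw z hz

theorem exists_isShift (hR : IsPartialColoring G R)
    (hl : (a :: l).IsChain (Arc G R)) (hnd : (a :: l).Nodup) (hy : ∀ d ∈ a :: l, y ∉ R d)
    (hya : ∀ z ∈ R a, ¬ G.Adj y z) :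
    ∃ Q, IsShift G R Q y a l ((a :: l).getLast (List.cons_ne_nil _ _)) := by
  induction l generalizing R a y with
  | nil => exact ⟨_, isShift_moveTo hR hya (hy a List.mem_cons_self)⟩
  | cons c l ih =>
    obtain ⟨⟨hac, w, hw, hwc⟩, hl⟩ := List.isChain_cons_cons.1 hl
    obtain ⟨ha, hnd⟩ := List.nodup_cons.1 hnd
    have hne : ∀ d ∈ c :: l, d ≠ a := fun d hd h => ha (h ▸ hd)
    have hyl : ∀ d ∈ c :: l, y ∉ R d := fun d hd => hy d (List.mem_cons_of_mem a hd)
    have hl' : (c :: l).IsChain (Arc G (moveTo R y a)) := hl.imp_of_mem_imp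
      fun p q hp hq hpq => hpq.moveTo (hne p hp) (hne q hq) (hyl p hp)
    have hsub : ∀ d ∈ c :: l, moveTo R y a d ⊆ R d := fun d hd =>
      moveTo_of_ne (hne d hd) ▸ Finset.erase_subset _ _
    obtain ⟨Q, hQ⟩ := ih (hR.moveTo hya) hl' hnd
      (fun d hd h => hne d hd (hR.eq_of_mem (hsub d hd h) hw))
      (fun z hz => hwc z (hsub c List.mem_cons_self hz))
    rw [List.getLast_cons_cons]
    exact ⟨Q, hQ.cons hR hac hw hwc hya (hy a List.mem_cons_self) hyl ha (List.getLast_mem _)⟩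

theorem IsShift.exists_mem_moveTo_iff {u z : V} {i : Fin r} (hQ : IsShift G R Q y a l b)
    (hy : y ∈ R i) (hu : u ∈ R b) : (∃ c, z ∈ moveTo Q u i c) ↔ ∃ c, z ∈ R c := by
  rw [Equitable.exists_mem_moveTo_iff, hQ.exists_mem_iff]
  constructor
  · rintro (rfl | rfl | h)
    exacts [⟨b, hu⟩, ⟨i, hy⟩, h]
  · exact fun h => Or.inr (Or.inr h)

theorem IsShift.card_moveTo {u : V} {i : Fin r} (hQ : IsShift G R Q y a l b)
    (hR : IsPartialColoring G R) (hb : b ∈ a :: l) (hi : i ∉ a :: l) (hy : y ∈ R i)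
    (hu : u ∈ R b) (c : Fin r) : (moveTo Q u i c).card = (R c).card := by
  have hbi : b ≠ i := fun h => hi (h ▸ hb)
  have huQ : u ∈ Q b := hQ.subset_last hu
  by_cases hci : c = i
  · subst hci
    rw [moveTo_self, hQ.eq_erase c hi, Finset.card_insert_of_notMem
        fun h => hbi (hR.eq_of_mem hu (Finset.mem_of_mem_erase h)), Finset.card_erase_add_one hy]
  rw [moveTo_of_ne hci]
  by_cases hc : c ∈ a :: l
  · by_cases hcb : c = b
    · subst hcb
      rw [Finset.card_erase_of_mem huQ, hQ.card_last, Nat.add_sub_cancel]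
    · rw [Finset.erase_eq_of_notMem fun h => hcb (hQ.isPartialColoring.eq_of_mem h huQ),
        hQ.card_eq c hc hcb]
  · have hyc : y ∉ R c := fun h => hci (hR.eq_of_mem h hy)
    have huc : u ∉ R c := fun h => hc (hR.eq_of_mem h hu ▸ hb)
    rw [hQ.eq_erase c hc, Finset.erase_eq_of_notMem hyc, Finset.erase_eq_of_notMem huc]

end Shift

section Recoloring

variable [Fintype V] {G : SimpleGraph V} {x : V} {r s : ℕ} [NeZero r] {P P' : Fin r → Finset V}

theorem AEColoring.isPartialColoring (hP : AEColoring G x s P) : IsPartialColoring G P :=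
  ⟨hP.1, hP.2.2.1⟩

theorem AEColoring.of_isPartialColoring (hP : AEColoring G x s P) (hP' : IsPartialColoring G P')
    (hcover : ∀ z, (∃ c, z ∈ P' c) ↔ ∃ c, z ∈ P c)
    (hcard : ∀ c, (P' c).card = (P c).card) :
    AEColoring G x s P' :=
  ⟨hP'.disjoint, fun z => (hcover z).trans (hP.2.1 z), hP'.indep, hcard 0 ▸ hP.2.2.2.1,
    fun c hc => hcard c ▸ hP.2.2.2.2 c hc⟩

/-- Shift `v` out of `P i` along the path `k :: L` to `P j`, then move the solo neighbour `u` of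
`v` from `P j` into `P i`. -/
theorem AEColoring.exists_shift_swap (hP : AEColoring G x s P) {i j k : Fin r}
    {L : List (Fin r)} {u v : V} (hchain : (k :: L).IsChain (Arc G P)) (hnd : (k :: L).Nodup)
    (hlast : (k :: L).getLast (List.cons_ne_nil _ _) = j) (hi : i ∉ k :: L) (hv : v ∈ P i)
    (hvk : ∀ z ∈ P k, ¬ G.Adj v z) (hu : u ∈ P j) (hvu : G.Adj v u)
    (hsolo : ∀ z ∈ P i, G.Adj u z → z = v) :
    ∃ P', AEColoring G x s P' ∧ (∀ c ∉ k :: L, c ≠ i → P' c = P c) ∧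
      P' i = insert u ((P i).erase v) ∧ v ∈ P' k ∧
      (L ≠ [] → ∃ c ∈ L, Arc G P' c k) := by
  have hR := hP.isPartialColoring
  obtain ⟨Q, hQ⟩ :=
    exists_isShift hR hchain hnd (fun c hc hvc => hi (hR.eq_of_mem hv hvc ▸ hc)) hvk
  rw [hlast] at hQ
  have hj : j ∈ k :: L := hlast ▸ List.getLast_mem _
  have hQi : Q i = (P i).erase v := hQ.eq_erase i hi
  have hki : k ≠ i := fun h => hi (h ▸ List.mem_cons_self)
  have hui : ∀ z ∈ Q i, ¬ G.Adj u z := fun z hz h =>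
    (Finset.mem_erase.1 (hQi ▸ hz)).1 (hsolo z (Finset.mem_of_mem_erase (hQi ▸ hz)) h)
  refine ⟨moveTo Q u i, hP.of_isPartialColoring (hQ.isPartialColoring.moveTo hui)
    (fun z => hQ.exists_mem_moveTo_iff hv hu) (hQ.card_moveTo hR hj hi hv hu), fun c hc hci => ?_,
    by rw [moveTo_self, hQi], ?_, fun hL => ?_⟩
  · have hvc : v ∉ P c := fun h => hci (hR.eq_of_mem h hv)
    have huc : u ∉ P c := fun h => hc (hR.eq_of_mem h hu ▸ hj)
    rw [moveTo_of_ne hci, hQ.eq_erase c hc, Finset.erase_eq_of_notMem hvc,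
      Finset.erase_eq_of_notMem huc]
  · rw [moveTo_of_ne hki]
    exact Finset.mem_erase.2 ⟨G.ne_of_adj hvu, hQ.mem_head⟩
  · obtain ⟨c, hc, hck, t, ht, htk⟩ := hQ.arc_to_head hL
    have hci : c ≠ i := fun h => hi (h ▸ List.mem_cons_of_mem k hc)
    have htu : t ≠ u := by
      rintro rfl
      exact htk v hQ.mem_head hvu.symm
    refine ⟨c, hc, hck, t, ?_, fun z hz => htk z ?_⟩
    · rw [moveTo_of_ne hci]
      exact Finset.mem_erase.2 ⟨htu, ht⟩
    · rw [moveTo_of_ne hki] at hz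
      exact Finset.mem_of_mem_erase hz

end Recoloring

section Accessibility

variable {G : SimpleGraph V} {r : ℕ} [NeZero r] {P P' : Fin r → Finset V} {i : Fin r}

theorem not_accessible_of_isChain {k : Fin r} {L : List (Fin r)}
    (hchain : (k :: L).IsChain (Arc G P)) (hk : ¬ Accessible G P k) :
    ∀ c ∈ k :: L, ¬ Accessible G P c := by
  rintro c (_ | ⟨_, hc⟩)
  · exact hk
  · exact hchain.cons_induction (fun c => ¬ Accessible G P c) L
      (fun _ _ harc hp hq => hp (.head harc hq)) hk c hc

theorem Terminal.accessible_of_eq (hterm : Terminal G P i)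
    (hsame : ∀ c, Accessible G P c → c ≠ i → P' c = P c) {X : Fin r}
    (hX : Accessible G P X) (hXi : X ≠ i) : Accessible G P' X := by
  have hpath : Relation.ReflTransGen (fun p q => Arc G P p q ∧ p ≠ i ∧ q ≠ i) X 0 :=
    not_not.1 fun h => hterm.2 X hX ⟨Ne.symm hXi, h⟩
  induction hpath using Relation.ReflTransGen.head_induction_on with
  | refl => exact .refl
  | @head a c hac hc ih =>
    have hcA : Accessible G P c := Relation.ReflTransGen.mono (fun _ _ h => h.1) _ _ hc
    have haA : Accessible G P a := .head hac.1 hcA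
    obtain ⟨⟨hne, t, ht, htc⟩, hai, hci⟩ := hac
    refine .head ⟨hne, t, hsame a haA hai ▸ ht, hsame c hcA hci ▸ htc⟩ (ih hcA hci)

theorem accCount_lt_of_accessible (hA : ∀ X, Accessible G P X → Accessible G P' X) {b : Fin r}
    (hb : Accessible G P' b) (hbB : ¬ Accessible G P b) : accCount G P < accCount G P' :=
  Finset.card_lt_card <| (Finset.ssubset_iff_of_subset fun X hX => by
    simp only [Finset.mem_filter, Finset.mem_univ, true_and] at hX ⊢
    exact hA X hX).2 ⟨b, by simpa using hb, by simpa using hbB⟩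

theorem accCount_lt_of_accessible_pair
    (hA : ∀ X, Accessible G P X → X ≠ i → Accessible G P' X)
    {b₁ b₂ : Fin r} (hb₁ : Accessible G P' b₁) (hb₂ : Accessible G P' b₂)
    (hb₁B : ¬ Accessible G P b₁) (hb₂B : ¬ Accessible G P b₂) (hne : b₁ ≠ b₂) :
    accCount G P < accCount G P' := by
  set A := Finset.univ.filter fun c => Accessible G P c
  have hsub :
      insert b₁ (insert b₂ (A.erase i)) ⊆ Finset.univ.filter fun c => Accessible G P' c := by
    intro c hc
    simp only [Finset.mem_insert, Finset.mem_erase, A, Finset.mem_filter, Finset.mem_univ,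
      true_and] at hc ⊢
    rcases hc with rfl | rfl | ⟨hci, hc⟩
    exacts [hb₁, hb₂, hA c hc hci]
  have hcard := Finset.card_le_card hsub
  rw [Finset.card_insert_of_notMem (by simp [hne, A, hb₁B]),
    Finset.card_insert_of_notMem (by simp [A, hb₂B])] at hcard
  have := Finset.pred_card_le_card_erase (s := A) (a := i)
  change A.card < (Finset.univ.filter fun c => Accessible G P' c).card
  omega

end Accessibility

section Solo

variable {G : SimpleGraph V} {r : ℕ} [NeZero r] {P P' : Fin r → Finset V} {i : Fin r} {u v : V}

theorem exists_movable_of_not_accessible (hiA : Accessible G P i) (hiA' : ¬ Accessible G P' i)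
    (hA : ∀ X, Accessible G P X → X ≠ i → Accessible G P' X)
    (hsame : ∀ c, Accessible G P c → c ≠ i → P' c = P c) (hsub : (P i).erase v ⊆ P' i) :
    ∃ c, Accessible G P c ∧ c ≠ i ∧ ∀ z ∈ P c, ¬ G.Adj v z := by
  rcases hiA.cases_head with rfl | ⟨c, ⟨hic, w, hw, hwc⟩, hc⟩
  · exact absurd .refl hiA'
  · obtain rfl : w = v := by_contra fun hwv => hiA' <|
      .head ⟨hic, w, hsub (Finset.mem_erase.2 ⟨hwv, hw⟩), hsame c hc hic.symm ▸ hwc⟩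
        (hA c hc hic.symm)
    exact ⟨c, hc, hic.symm, hwc⟩

theorem exists_nonaccessible_arc_of_solo [Fintype V] {x : V} {s : ℕ} (hP : AEColoring G x s P)
    (hP' : AEColoring G x s P') (hsame : ∀ c, Accessible G P c → c ≠ i → P' c = P c)
    (hP'i : P' i = insert u ((P i).erase v)) (hiA : Accessible G P i) {u' : V} {b : Fin r}
    (hu'b : u' ∈ P b) (hbB : ¬ Accessible G P b) (hu'u : u' ≠ u) (huu' : ¬ G.Adj u u')
    (hsolo' : ∀ z ∈ P i, G.Adj u' z → z = v) :
    ∃ b', ¬ Accessible G P b' ∧ Arc G P' b' i := by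
  have hR := hP.isPartialColoring
  obtain ⟨b', hb'⟩ := (hP'.2.1 u').2 ((hP.2.1 u').1 ⟨b, hu'b⟩)
  have hb'i : b' ≠ i := by
    rintro rfl
    rw [hP'i, Finset.mem_insert, Finset.mem_erase] at hb'
    rcases hb' with h | ⟨-, h⟩
    exacts [hu'u h, hbB (hR.eq_of_mem hu'b h ▸ hiA)]
  refine ⟨b', fun hA => hbB ?_, hb'i, u', hb', fun z hz => ?_⟩
  · rwa [hR.eq_of_mem hu'b (hsame b' hA hb'i ▸ hb')]
  · rw [hP'i, Finset.mem_insert, Finset.mem_erase] at hz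
    rcases hz with rfl | ⟨hzv, hz⟩
    exacts [fun h => huu' h.symm, fun h => hzv (hsolo' z hz h)]

end Solo

theorem solo_class_not_reachable_from_F0_general (V : Type*) [Fintype V] (G : SimpleGraph V)
    (x : V) (r s : ℕ) [NeZero r]
    (P : Fin r → Finset V) (hP : AEColoring G x s P)
    (hmax : MaxAccessible G x s P)
    (i : Fin r) (hterm : Terminal G P i)
    (v : V) (hv : v ∈ P i)
    (u : V) (j : Fin r) (hu : u ∈ P j)
    (huQ' : InQ' G P i v u) :
    ∀ k : Fin r, (¬ Accessible G P k ∧ ∀ w ∈ P k, ¬ G.Adj v w) →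
      ¬ Relation.ReflTransGen (Arc G P) k j := by
  rintro k ⟨hkB, hvk⟩ hkj
  obtain ⟨⟨-, hvu, hsolo⟩, u', ⟨⟨b, hbB, hu'b⟩, -, hsolo'⟩, hu'u, huu'⟩ := huQ'
  obtain ⟨L, hchain, hlast, hnd⟩ := List.exists_nodup_isChain_cons_of_relationReflTransGen hkj
  have hpathB := not_accessible_of_isChain hchain hkB
  have hL : L ≠ [] := by
    rintro rfl
    obtain rfl : k = j := hlast
    exact hvk u hu hvu
  obtain ⟨P', hP', hout, hP'i, hvk', hback⟩ :=
    hP.exists_shift_swap hchain hnd hlast (fun h => hpathB i h hterm.1) hv hvk hu hvu hsolo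
  have hsame : ∀ c, Accessible G P c → c ≠ i → P' c = P c :=
    fun c hc hci => hout c (fun h => hpathB c h hc) hci
  have hA : ∀ X, Accessible G P X → X ≠ i → Accessible G P' X :=
    fun _ => hterm.accessible_of_eq hsame
  obtain ⟨b', hb'B, hb'i⟩ :=
    exists_nonaccessible_arc_of_solo hP hP' hsame hP'i hterm.1 hu'b hbB hu'u huu' hsolo'
  refine (hmax P' hP').not_gt ?_
  by_cases hiA' : Accessible G P' i
  · refine accCount_lt_of_accessible (fun X hX => ?_) (.head hb'i hiA') hb'B
    by_cases hXi : X = i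
    exacts [hXi ▸ hiA', hA X hX hXi]
  · obtain ⟨c, hcA, hci, hvc⟩ := exists_movable_of_not_accessible hterm.1 hiA' hA hsame
      (hP'i ▸ Finset.subset_insert _ _)
    obtain ⟨c₁, hc₁, hc₁k⟩ := hback hL
    have hkA' : Accessible G P' k :=
      .head ⟨fun h => hkB (h ▸ hcA), v, hvk', hsame c hcA hci ▸ hvc⟩ (hA c hcA hci)
    exact accCount_lt_of_accessible_pair hA hkA' (.head hc₁k hkA') hkB
      (hpathB c₁ (List.mem_cons_of_mem k hc₁)) hc₁k.1.symm

/-- **Lemma 2.3(b).** Let `P` be an almost equitable coloring of `G − x` maximizing the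
number of accessible classes, let `v` be an ordinary vertex of a terminal accessible
class `P i`, and let `u ∈ Q'(v)` lie in the non-accessible class `P j`.  If `F₀(v)`,
the set of non-accessible classes containing no neighbor of `v`, is nonempty, then
`P j` is not reachable from `F₀(v)` in the auxiliary digraph. -/
theorem solo_class_not_reachable_from_F0 (V : Type*) [Fintype V] (G : SimpleGraph V)
    (x : V) (r s : ℕ) [NeZero r] (hr : 2 ≤ r) (hs : 1 ≤ s)
    (hcard : Fintype.card V = r * s)
    (P : Fin r → Finset V) (hP : AEColoring G x s P)
    (hmax : MaxAccessible G x s P)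
    (i : Fin r) (hterm : Terminal G P i)
    (v : V) (hv : v ∈ P i) (hord : Ordinary G P i v)
    (u : V) (j : Fin r) (hu : u ∈ P j) (hjB : ¬ Accessible G P j)
    (huQ' : InQ' G P i v u)
    (hF0 : ∃ k : Fin r, ¬ Accessible G P k ∧ ∀ w ∈ P k, ¬ G.Adj v w) :
    ∀ k : Fin r, (¬ Accessible G P k ∧ ∀ w ∈ P k, ¬ G.Adj v w) →
      ¬ Relation.ReflTransGen (Arc G P) k j :=
  solo_class_not_reachable_from_F0_general V G x r s P hP hmax i hterm v hv u j hu huQ'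

end Equitable
end

section
/- Setup: let s ≥ 1 be an integer, let G be a finite simple graph on 8s vertices satisfying the planar bipartite edge bound, let x be a vertex of G, and let V_1, …, V_8 be an almost equitable coloring of G − x with small class V_1, auxiliary digraph H, accessible classes A and non-accessible classes B, chosen so that no almost equitable coloring of G − x has more accessible classes. Suppose A = {V_1, V_2, V_3} (so there are exactly 3 accessible classes) and both V_2 and V_3 are terminal. Then for each j ∈ {2, 3}, every vertex v ∈ V_j that has a solo neighbor in some class of B has a neighbor in V_1 and a neighbor in V_{5−j}. (This is Lemma 4.3 of the paper.) -/
open scoped Classical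

namespace Equitable

variable {V : Type*}

/-!
Let `{a, b} = {1, 2}` and let `v ∈ P a` have a solo neighbour `u` in a non-accessible class `P k`.
If `v` has no neighbour in `P 0`, moving `v` into the small class is legal, and afterwards `P 0`,
`P a` and `P k` are accessible (`v` was the only neighbour of `u` in `P a`). By maximality no
further class becomes accessible, so every vertex of the four classes outside `{0, a, b, k}` has a
neighbour in each of `P 0`, `P a`, `P b`, `P k`: at least `16s` edges between sets of `4s` and
`4s - 1` vertices, against the planar bound `2(8s - 1) - 4`.

If `v` has no neighbour in `P b`, then since `P a` does not block `P b`, some `w ∈ P b` has no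
neighbour in `P 0`. Moving `w` into the small class and then `v` into `P b \ {w}` keeps `P 0`,
`P a`, `P b` accessible and also makes `P k` accessible, four in all.
-/

open Finset

section EdgeCount

variable [Fintype V] {G : SimpleGraph V} {X Y : Finset V}

lemma sum_card_filter_adj_le_edgesBetween (hXY : Disjoint X Y) :
    ∑ y ∈ Y, #(X.filter (G.Adj y)) ≤ edgesBetween G X Y := by
  have hpairs : #((Y ×ˢ X).filter fun p => G.Adj p.1 p.2) = ∑ y ∈ Y, #(X.filter (G.Adj y)) := by
    simp only [card_filter, sum_product]
  rw [← hpairs]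
  refine card_le_card_of_injOn (fun p => s(p.2, p.1)) ?_ ?_
  · intro p hp
    simp only [coe_filter, mem_product, Set.mem_ofPred_eq] at hp
    simp only [coe_filter, SimpleGraph.mem_edgeFinset, SimpleGraph.mem_edgeSet, Set.mem_ofPred_eq]
    exact ⟨hp.2.symm, p.2, hp.1.2, p.1, hp.1.1, rfl⟩
  · rintro ⟨y₁, z₁⟩ hp₁ ⟨y₂, z₂⟩ hp₂ h
    simp only [coe_filter, mem_product, Set.mem_ofPred_eq] at hp₁ hp₂
    simp only [Sym2.eq_iff] at h
    rcases h with ⟨rfl, rfl⟩ | ⟨rfl, -⟩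
    · rfl
    · exact (disjoint_left.mp hXY hp₁.1.2 hp₂.1.1).elim

lemma PlanarBipBound.exists_card_filter_adj_lt_four (hbip : PlanarBipBound G)
    (hXY : Disjoint X Y) (h3 : 3 ≤ #X + #Y) (hle : #X ≤ #Y) :
    ∃ y ∈ Y, #(X.filter (G.Adj y)) < 4 := by
  by_contra! h
  have hlow : 4 * #Y ≤ edgesBetween G X Y := calc
    4 * #Y = ∑ _y ∈ Y, 4 := by rw [sum_const, smul_eq_mul, mul_comm]
    _ ≤ ∑ y ∈ Y, #(X.filter (G.Adj y)) := sum_le_sum h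
    _ ≤ edgesBetween G X Y := sum_card_filter_adj_le_edgesBetween hXY
  have := hbip X Y hXY h3
  omega

end EdgeCount

section Recoloring

variable {r : ℕ} [NeZero r] {G : SimpleGraph V} {P : Fin r → Finset V}

/-- Moves `v` from `P a` into the small class; the labels `0` and `a` are swapped so that the
depleted class is again the small class `P 0`. -/
noncomputable def moveToSmall (P : Fin r → Finset V) (a : Fin r) (v : V) : Fin r → Finset V :=
  fun i => if i = 0 then (P a).erase v else if i = a then insert v (P 0) else P i

variable {a i : Fin r} {v : V}

@[simp] lemma moveToSmall_zero : moveToSmall P a v 0 = (P a).erase v := if_pos rfl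

@[simp] lemma moveToSmall_self (ha : a ≠ 0) : moveToSmall P a v a = insert v (P 0) := by
  simp [moveToSmall, ha]

@[simp] lemma moveToSmall_of_ne (hi0 : i ≠ 0) (hia : i ≠ a) : moveToSmall P a v i = P i := by
  simp [moveToSmall, hi0, hia]

lemma AEColoring.moveToSmall [Fintype V] {x : V} {s : ℕ} (hP : AEColoring G x s P) (ha : a ≠ 0)
    (hv : v ∈ P a) (hno : ∀ z ∈ P 0, ¬ G.Adj v z) :
    AEColoring G x s (moveToSmall P a v) := by
  obtain ⟨hdisj, hcov, hind, hc0, hcs⟩ := hP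
  have huniq : ∀ {i j z}, z ∈ P i → z ∈ P j → i = j := fun {i j _} hi hj => by
    by_contra hij; exact disjoint_left.mp (hdisj i j hij) hi hj
  refine ⟨?_, ?_, ?_, ?_, ?_⟩
  · intro i j hij
    rw [disjoint_left]
    intro z hzi hzj
    simp only [Equitable.moveToSmall] at hzi hzj
    split_ifs at hzi hzj <;> grind
  · intro z
    rw [← hcov z]
    constructor
    · rintro ⟨i, hi⟩
      simp only [Equitable.moveToSmall] at hi
      split_ifs at hi <;> grind
    · rintro ⟨i, hi⟩
      by_cases hzv : z = v
      · exact ⟨a, by simp [ha, hzv]⟩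
      by_cases hi0 : i = 0
      · exact ⟨a, by simp [ha, hi0 ▸ hi]⟩
      by_cases hia : i = a
      · exact ⟨0, by simp [hzv, hia ▸ hi]⟩
      · exact ⟨i, by simp [hi0, hia, hi]⟩
  · intro i p hp q hq
    simp only [Equitable.moveToSmall] at hp hq
    have := G.loopless
    split_ifs at hp hq <;> grind [SimpleGraph.adj_comm]
  · rw [moveToSmall_zero, card_erase_of_mem hv, hcs a ha]
  · intro i hi0
    by_cases hia : i = a
    · rw [hia, moveToSmall_self ha, card_insert_of_notMem fun h => ha (huniq hv h), hc0, ← hcs a ha]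
      have := card_pos.2 ⟨v, hv⟩
      omega
    · rw [moveToSmall_of_ne hi0 hia, hcs i hi0]

end Recoloring

section Accessibility

variable {r : ℕ} [NeZero r] {G : SimpleGraph V} {P : Fin r → Finset V}

lemma exists_adj_of_not_accessible {m j : Fin r} (hm : ¬ Accessible G P m)
    (hj : Accessible G P j) {y : V} (hy : y ∈ P m) : ∃ z ∈ P j, G.Adj y z := by
  by_contra! h
  have hmj : m ≠ j := fun hmj => hm (hmj ▸ hj)
  exact hm (.head ⟨hmj, y, hy, h⟩ hj)

lemma exists_arc_accessible_of_not_blocks {a b : Fin r} (hb0 : b ≠ 0) (hab : a ≠ b)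
    (hnb : ¬ Blocks G P a b) : ∃ c, c ≠ a ∧ Arc G P b c ∧ Accessible G P c := by
  simp only [Blocks, not_and, not_not] at hnb
  rcases (hnb hab).cases_head with hb | ⟨c, ⟨hbc, -, hca⟩, hc⟩
  · exact absurd hb hb0
  · exact ⟨c, hca, hbc, Relation.ReflTransGen.mono (fun _ _ h => h.1) _ _ hc⟩

lemma card_le_accCount {I : Finset (Fin r)} (hI : ∀ i ∈ I, Accessible G P i) :
    #I ≤ accCount G P :=
  card_le_card fun i hi => mem_filter.2 ⟨mem_univ i, hI i hi⟩

lemma MaxAccessible.card_le_three [Fintype V] {x : V} {s : ℕ} {a b : Fin r}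
    (hmax : MaxAccessible G x s P) (hacc : ∀ k, Accessible G P k ↔ k = 0 ∨ k = a ∨ k = b)
    {P' : Fin r → Finset V} (hP' : AEColoring G x s P') {I : Finset (Fin r)}
    (hI : ∀ i ∈ I, Accessible G P' i) : #I ≤ 3 := by
  have hfilter : univ.filter (Accessible G P) = {0, a, b} := by ext k; simp [hacc]
  calc #I ≤ accCount G P' := card_le_accCount hI
    _ ≤ accCount G P := hmax P' hP'
    _ ≤ 3 := by rw [accCount, hfilter]; exact Finset.card_le_three

variable {a k : Fin r} {u v : V}

lemma arc_moveToSmall_self (ha : a ≠ 0) (hv : v ∈ P a)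
    (hind : ∀ u ∈ P a, ∀ w ∈ P a, ¬ G.Adj u w) : Arc G (moveToSmall P a v) a 0 :=
  ⟨ha, v, by simp [ha], fun z hz => hind v hv z (mem_of_mem_erase (by simpa using hz))⟩

lemma arc_moveToSmall_of_unique_adj (hk0 : k ≠ 0) (hka : k ≠ a) (hu : u ∈ P k)
    (huniq : ∀ w ∈ P a, G.Adj u w → w = v) : Arc G (moveToSmall P a v) k 0 := by
  refine ⟨hk0, u, by simpa [hk0, hka] using hu, fun z hz hadj => ?_⟩
  rw [moveToSmall_zero, mem_erase] at hz
  exact hz.1 (huniq z hz.2 hadj)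

end Accessibility

section Counting

variable {r : ℕ} {G : SimpleGraph V} {P : Fin r → Finset V}

lemma card_le_card_filter_adj_biUnion (hdisj : ∀ i j, i ≠ j → Disjoint (P i) (P j))
    {I : Finset (Fin r)} {y : V} (hy : ∀ i ∈ I, ∃ z ∈ P i, G.Adj y z) :
    #I ≤ #((I.biUnion P).filter (G.Adj y)) := calc
  #I = ∑ _i ∈ I, 1 := card_eq_sum_ones I
  _ ≤ ∑ i ∈ I, #((P i).filter (G.Adj y)) := sum_le_sum fun i hi =>
    let ⟨z, hz, hyz⟩ := hy i hi
    card_pos.2 ⟨z, mem_filter.2 ⟨hz, hyz⟩⟩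
  _ = #((I.biUnion P).filter (G.Adj y)) := by
    rw [filter_biUnion, card_biUnion fun i _ j _ hij => disjoint_filter_filter (hdisj i j hij)]

variable [NeZero r] [Fintype V]

lemma AEColoring.exists_not_adj_of_card_le_card_compl (hbip : PlanarBipBound G) {x : V} {s : ℕ}
    (hP : AEColoring G x s P) (hs : 1 ≤ s) {I : Finset (Fin r)} (h0 : 0 ∈ I) (h4 : 4 ≤ #I)
    (hle : #I ≤ #Iᶜ) : ∃ m ∉ I, ∃ y ∈ P m, ∃ i ∈ I, ∀ z ∈ P i, ¬ G.Adj y z := by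
  obtain ⟨hdisj, -, -, hc0, hcs⟩ := hP
  by_contra! hall
  have hXY : Disjoint (I.biUnion P) (Iᶜ.biUnion P) := by
    simp only [disjoint_biUnion_left, disjoint_biUnion_right]
    exact fun j hj i hi => hdisj i j fun hij => mem_compl.1 hj (hij ▸ hi)
  have hclass : ∀ i, #(P i) ≤ s := fun i => by
    by_cases hi0 : i = 0
    · rw [hi0, hc0]; omega
    · exact (hcs i hi0).le
  have hX : #(I.biUnion P) ≤ #I * s := calc
    #(I.biUnion P) ≤ ∑ i ∈ I, #(P i) := card_biUnion_le
    _ ≤ #I * s := by simpa using sum_le_sum fun i (_ : i ∈ I) => hclass i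
  have hY : #(Iᶜ.biUnion P) = #Iᶜ * s := by
    rw [card_biUnion fun i _ j _ hij => hdisj i j hij]
    exact sum_const_nat fun m hm => hcs m fun hm0 => mem_compl.1 hm (hm0 ▸ h0)
  obtain ⟨y, hy, hfew⟩ := hbip.exists_card_filter_adj_lt_four hXY
    (by rw [hY]; nlinarith) (by rw [hY]; nlinarith)
  obtain ⟨m, hm, hym⟩ := mem_biUnion.1 hy
  have := card_le_card_filter_adj_biUnion hdisj (hall m (mem_compl.1 hm) y hym)
  omega

end Counting

section ThreeAccessible

variable [Fintype V] {G : SimpleGraph V} {x : V} {s : ℕ} {P : Fin 8 → Finset V} {a b : Fin 8}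
  {u v : V}

lemma exists_adj_zero_of_soloNbr (hbip : PlanarBipBound G) (hP : AEColoring G x s P)
    (hmax : MaxAccessible G x s P) (ha0 : a ≠ 0) (hb0 : b ≠ 0) (hab : a ≠ b)
    (hacc : ∀ k, Accessible G P k ↔ k = 0 ∨ k = a ∨ k = b) (hv : v ∈ P a)
    (hu : SoloNbr G P a v u) : ∃ w ∈ P 0, G.Adj v w := by
  obtain ⟨⟨k, hk, huk⟩, -, huniq⟩ := hu
  obtain ⟨hk0, hka, hkb⟩ : k ≠ 0 ∧ k ≠ a ∧ k ≠ b := by simpa [hacc] using hk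
  by_contra! hno
  have hP' := hP.moveToSmall ha0 hv hno
  have acc_a : Accessible G (moveToSmall P a v) a :=
    .single (arc_moveToSmall_self ha0 hv (hP.2.2.1 a))
  have acc_k : Accessible G (moveToSmall P a v) k :=
    .single (arc_moveToSmall_of_unique_adj hk0 hka huk huniq)
  have hs : 1 ≤ s := hP.2.2.2.2 a ha0 ▸ card_pos.2 ⟨v, hv⟩
  have hI : #({0, a, b, k} : Finset (Fin 8)) = 4 := card_eq_four.2
    ⟨0, a, b, k, ha0.symm, hb0.symm, hk0.symm, hab, hka.symm, hkb.symm, rfl⟩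
  obtain ⟨m, hm, y, hy, i, hi, hyi⟩ := hP.exists_not_adj_of_card_le_card_compl hbip hs
    (I := {0, a, b, k}) (by simp) hI.ge (by rw [card_compl, hI]; rfl)
  simp only [mem_insert, mem_singleton, not_or] at hm hi
  obtain ⟨hm0, hma, hmb, hmk⟩ := hm
  have hmacc : ¬ Accessible G P m := by simp [hacc, hm0, hma, hmb]
  -- `y` sees every accessible class of `P`, so the class it misses is `P k`
  have hik : i = k := by
    by_contra hik
    obtain ⟨z, hz, hyz⟩ := exists_adj_of_not_accessible hmacc ((hacc i).2 (by tauto)) hy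
    exact hyi z hz hyz
  rw [hik] at hyi
  have acc_m : Accessible G (moveToSmall P a v) m := .head
    ⟨hmk, y, by rwa [moveToSmall_of_ne hm0 hma], by rwa [moveToSmall_of_ne hk0 hka]⟩ acc_k
  have h4 := hmax.card_le_three hacc hP' (I := {0, a, k, m}) (by
    simp only [mem_insert, mem_singleton, forall_eq_or_imp, forall_eq]
    exact ⟨.refl, acc_a, acc_k, acc_m⟩)
  rw [card_eq_four.2 ⟨0, a, k, m, ha0.symm, hk0.symm, Ne.symm hm0, hka.symm, Ne.symm hma,
    Ne.symm hmk, rfl⟩] at h4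
  omega

lemma exists_adj_of_soloNbr_of_terminal (hP : AEColoring G x s P)
    (hmax : MaxAccessible G x s P) (ha0 : a ≠ 0) (hb0 : b ≠ 0) (hab : a ≠ b)
    (hacc : ∀ k, Accessible G P k ↔ k = 0 ∨ k = a ∨ k = b) (hterm : Terminal G P a)
    (hv : v ∈ P a) (hu : SoloNbr G P a v u) : ∃ w ∈ P b, G.Adj v w := by
  obtain ⟨⟨k, hk, huk⟩, -, huniq⟩ := hu
  obtain ⟨hk0, hka, hkb⟩ : k ≠ 0 ∧ k ≠ a ∧ k ≠ b := by simpa [hacc] using hk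
  by_contra! hno
  obtain ⟨c, hca, ⟨hbc, w, hw, hw0⟩, hc⟩ :=
    exists_arc_accessible_of_not_blocks hb0 hab (hterm.2 b ((hacc b).2 (by simp)))
  obtain rfl : c = 0 := by have := (hacc c).1 hc; grind
  -- move `w` into the small class, then `v` into the class `P b \ {w}` that became small
  have hQ := hP.moveToSmall hb0 hw hw0
  have hQa : moveToSmall P b w a = P a := moveToSmall_of_ne ha0 hab
  have hR := hQ.moveToSmall ha0 (hQa ▸ hv) fun z hz => hno z (mem_of_mem_erase (by simpa using hz))
  have acc_a : Accessible G (moveToSmall (moveToSmall P b w) a v) a :=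
    .single (arc_moveToSmall_self ha0 (hQa ▸ hv) (hQ.2.2.1 a))
  have acc_b : Accessible G (moveToSmall (moveToSmall P b w) a v) b := by
    refine .head ⟨hab.symm, w, by simp [moveToSmall_of_ne hb0 hab.symm, hb0], ?_⟩ acc_a
    rw [moveToSmall_self ha0, moveToSmall_zero]
    rintro z hz
    rcases mem_insert.1 hz with rfl | hz
    · exact fun h => hno w hw h.symm
    · exact hP.2.2.1 b w hw z (mem_of_mem_erase hz)
  have acc_k : Accessible G (moveToSmall (moveToSmall P b w) a v) k :=
    .single (arc_moveToSmall_of_unique_adj hk0 hka (by rwa [moveToSmall_of_ne hk0 hkb])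
      (hQa ▸ huniq))
  have h4 := hmax.card_le_three hacc hR (I := {0, a, b, k}) (by
    simp only [mem_insert, mem_singleton, forall_eq_or_imp, forall_eq]
    exact ⟨.refl, acc_a, acc_b, acc_k⟩)
  rw [card_eq_four.2 ⟨0, a, b, k, ha0.symm, hb0.symm, hk0.symm, hab, hka.symm, hkb.symm,
    rfl⟩] at h4
  omega

end ThreeAccessible

theorem solo_vertex_neighbors_three_accessible_general (V : Type*) [Fintype V]
    (G : SimpleGraph V) (x : V) (s : ℕ) (hbip : PlanarBipBound G)
    (P : Fin 8 → Finset V) (hP : AEColoring G x s P)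
    (hmax : MaxAccessible G x s P)
    (hacc : ∀ k : Fin 8, Accessible G P k ↔ (k = 0 ∨ k = 1 ∨ k = 2))
    (hterm1 : Terminal G P 1) (hterm2 : Terminal G P 2) :
    (∀ v ∈ P 1, (∃ u : V, SoloNbr G P 1 v u) →
      (∃ w ∈ P 0, G.Adj v w) ∧ (∃ w ∈ P 2, G.Adj v w)) ∧
    (∀ v ∈ P 2, (∃ u : V, SoloNbr G P 2 v u) →
      (∃ w ∈ P 0, G.Adj v w) ∧ (∃ w ∈ P 1, G.Adj v w)) := by
  have hacc' : ∀ k : Fin 8, Accessible G P k ↔ (k = 0 ∨ k = 2 ∨ k = 1) := fun k =>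
    (hacc k).trans (by tauto)
  refine ⟨fun v hv ⟨u, hu⟩ => ⟨?_, ?_⟩, fun v hv ⟨u, hu⟩ => ⟨?_, ?_⟩⟩
  · exact exists_adj_zero_of_soloNbr hbip hP hmax (by decide) (by decide) (by decide) hacc hv hu
  · exact exists_adj_of_soloNbr_of_terminal hP hmax (by decide) (by decide) (by decide) hacc
      hterm1 hv hu
  · exact exists_adj_zero_of_soloNbr hbip hP hmax (by decide) (by decide) (by decide) hacc' hv hu
  · exact exists_adj_of_soloNbr_of_terminal hP hmax (by decide) (by decide) (by decide) hacc'
      hterm2 hv hu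

/-- **Lemma 4.3.** Let `G` be a graph on `8s` vertices satisfying the planar bipartite
edge bound, and let `P` be an almost equitable coloring of `G − x` maximizing the
number of accessible classes, whose accessible classes are exactly `P 0`, `P 1`, `P 2`
with both `P 1` and `P 2` terminal.  Then every vertex of `P 1` (resp. `P 2`) with a
solo neighbor in a non-accessible class has a neighbor in `P 0` and a neighbor in
`P 2` (resp. `P 1`). -/
theorem solo_vertex_neighbors_three_accessible (V : Type*) [Fintype V]
    (G : SimpleGraph V) (x : V) (s : ℕ) (hs : 1 ≤ s)
    (hcard : Fintype.card V = 8 * s) (hbip : PlanarBipBound G)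
    (P : Fin 8 → Finset V) (hP : AEColoring G x s P)
    (hmax : MaxAccessible G x s P)
    (hacc : ∀ k : Fin 8, Accessible G P k ↔ (k = 0 ∨ k = 1 ∨ k = 2))
    (hterm1 : Terminal G P 1) (hterm2 : Terminal G P 2) :
    (∀ v ∈ P 1, (∃ u : V, SoloNbr G P 1 v u) →
      (∃ w ∈ P 0, G.Adj v w) ∧ (∃ w ∈ P 2, G.Adj v w)) ∧
    (∀ v ∈ P 2, (∃ u : V, SoloNbr G P 2 v u) →
      (∃ w ∈ P 0, G.Adj v w) ∧ (∃ w ∈ P 1, G.Adj v w)) :=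
  solo_vertex_neighbors_three_accessible_general V G x s hbip P hP hmax hacc hterm1 hterm2

end Equitable
end
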